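/- For every pair of integers 2 ≤ N ≤ q and every 0 < δ ≤ 1 there exists η = η(δ, N) > 0 with the following property. Let H_1,…,H_N be distinct m-dimensional closed half-planes in ℝ^{m+n} with common (m−1)-dimensional boundary subspace V, and let π_i be the full m-plane extending H_i across V. Then there exist κ ∈ ℕ ∪ {0} and subcollections {1,…,N} = I(0) ⊋ I(1) ⊋ ⋯ ⊋ I(κ) with #I(κ) ≥ 2 such that, defining m(k) := min_{i<j ∈ I(k)} dist_H(H_i ∩ B̄_1, H_j ∩ B̄_1), d(k) := max_{i ∈ I(0)} min_{j ∈ I(k)} dist_H(H_i ∩ B̄_1, H_j ∩ B̄_1), and M(k) := max_{i<j ∈ I(k)} dist_H(π_i ∩ B̄_1, π_j ∩ B̄_1), the following hold: (i) M(κ) = M(0); (ii) η M(κ) ≤ m(κ); (iii) d(k) ≤ δ m(k) and η d(k) ≤ m(k−1) for every 1 ≤ k ≤ κ; (iv) m(k−1) ≤ δ m(k) for every 1 ≤ k ≤ κ. -/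

import Mathlib

/-!
The half-planes cut to the unit ball form a finite pseudometric space under the Hausdorff
distance. Fix a pair `a, b` realising the maximal separation of the extended planes. While the
minimal separation `m` of the current layer `S` is below `η · dist_H(a, b)`, pigeonhole over the at
most `N²` pairwise distances gives a threshold `G ∈ [m, (2/δ)^{N²} m]` such that no distance lies
in `(G, 2G/δ]`; this is where `η = (δ/2)^{N²+1}` comes from. A maximal `G`-separated subset of `S`
containing `a, b` is the next layer: its minimal separation exceeds `G`, hence `2G/δ`, while every
index lies within `2G` of it. Layers shrink strictly, so the process stops. Finally, an extended
plane is its half-plane together with the mirror image across `V`, so plane distances are bounded by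
half-plane distances, and `a, b` still realise the maximal plane separation in the last layer.
-/

open Metric

/-- Maximal pairwise Hausdorff separation (inside `B`) of the sets `f i`, `i ∈ I`. -/
noncomputable def maxSep {ι : Type*} {α : Type*} [MetricSpace α]
    (B : Set α) (I : Finset ι) (f : ι → Set α) : ℝ :=
  sSup {d : ℝ | ∃ i ∈ I, ∃ j ∈ I, i ≠ j ∧ d = Metric.hausdorffDist (f i ∩ B) (f j ∩ B)}

/-- Minimal pairwise Hausdorff separation (inside `B`) of the sets `f i`, `i ∈ I`. -/
noncomputable def minSep {ι : Type*} {α : Type*} [MetricSpace α]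
    (B : Set α) (I : Finset ι) (f : ι → Set α) : ℝ :=
  sInf {d : ℝ | ∃ i ∈ I, ∃ j ∈ I, i ≠ j ∧ d = Metric.hausdorffDist (f i ∩ B) (f j ∩ B)}

/-- `max_{i ∈ I₀} min_{j ∈ I} dist_H (f i ∩ B, f j ∩ B)`. -/
noncomputable def maxMinDist {ι : Type*} {α : Type*} [MetricSpace α]
    (B : Set α) (I₀ I : Finset ι) (f : ι → Set α) : ℝ :=
  sSup {d : ℝ | ∃ i ∈ I₀,
    d = sInf {d' : ℝ | ∃ j ∈ I, d' = Metric.hausdorffDist (f i ∩ B) (f j ∩ B)}}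

open Finset

section PairDistances

variable {ι : Type*}

def pairDists (D : ι → ι → ℝ) (S : Finset ι) : Set ℝ :=
  {d | ∃ i ∈ S, ∃ j ∈ S, i ≠ j ∧ d = D i j}

noncomputable def minPairDist (D : ι → ι → ℝ) (S : Finset ι) : ℝ :=
  sInf (pairDists D S)

variable {D : ι → ι → ℝ} {S T : Finset ι} {i j : ι}

lemma mem_pairDists (hi : i ∈ S) (hj : j ∈ S) (hij : i ≠ j) : D i j ∈ pairDists D S :=
  ⟨i, hi, j, hj, hij, rfl⟩

lemma pairDists_mono (hST : S ⊆ T) : pairDists D S ⊆ pairDists D T := by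
  rintro _ ⟨i, hi, j, hj, hij, rfl⟩
  exact mem_pairDists (hST hi) (hST hj) hij

lemma pairDists_finite (D : ι → ι → ℝ) (S : Finset ι) : (pairDists D S).Finite :=
  ((S ×ˢ S).image fun p => D p.1 p.2).finite_toSet.subset <| by
    rintro _ ⟨i, hi, j, hj, -, rfl⟩
    exact mem_image_of_mem _ (mem_product.2 ⟨hi, hj⟩ : (i, j) ∈ S ×ˢ S)

lemma minPairDist_nonneg (hD : ∀ i j, 0 ≤ D i j) (S : Finset ι) : 0 ≤ minPairDist D S :=
  Real.sInf_nonneg <| by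
    rintro _ ⟨i, -, j, -, -, rfl⟩
    exact hD i j

lemma exists_eq_minPairDist (hi : i ∈ S) (hj : j ∈ S) (hij : i ≠ j) :
    ∃ i ∈ S, ∃ j ∈ S, i ≠ j ∧ D i j = minPairDist D S := by
  obtain ⟨i, hi, j, hj, hij, h⟩ :=
    Set.Nonempty.csInf_mem ⟨_, mem_pairDists hi hj hij⟩ (pairDists_finite D S)
  exact ⟨i, hi, j, hj, hij, h.symm⟩

lemma exists_eq_sSup_pairDists (hi : i ∈ S) (hj : j ∈ S) (hij : i ≠ j) :
    ∃ i ∈ S, ∃ j ∈ S, i ≠ j ∧ D i j = sSup (pairDists D S) := by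
  obtain ⟨i, hi, j, hj, hij, h⟩ :=
    Set.Nonempty.csSup_mem ⟨_, mem_pairDists hi hj hij⟩ (pairDists_finite D S)
  exact ⟨i, hi, j, hj, hij, h.symm⟩

lemma sSup_pairDists_eq_of_subset (hST : S ⊆ T) (hi : i ∈ S) (hj : j ∈ S) (hij : i ≠ j)
    (hmax : D i j = sSup (pairDists D T)) : sSup (pairDists D S) = sSup (pairDists D T) :=
  le_antisymm
    (csSup_le_csSup (pairDists_finite D T).bddAbove ⟨_, mem_pairDists hi hj hij⟩
      (pairDists_mono hST))
    (hmax ▸ le_csSup (pairDists_finite D S).bddAbove (mem_pairDists hi hj hij))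

end PairDistances

lemma exists_gap_geometric {R m : ℝ} (hR : 1 ≤ R) (hm : 0 ≤ m) {s : Finset ℝ} {P : ℕ}
    (hs : #s ≤ P) : ∃ G, m ≤ G ∧ G ≤ R ^ P * m ∧ ∀ v ∈ s, v ∉ Set.Ioc G (R * G) := by
  suffices ∃ t ≤ P, ∀ v ∈ s, v ∉ Set.Ioc (R ^ t * m) (R ^ (t + 1) * m) by
    obtain ⟨t, htP, ht⟩ := this
    refine ⟨R ^ t * m, le_mul_of_one_le_left hm (one_le_pow₀ hR),
      mul_le_mul_of_nonneg_right (pow_le_pow_right₀ hR htP) hm, fun v hv => ?_⟩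
    simpa only [pow_succ', mul_assoc] using ht v hv
  by_contra! h
  choose! f hfs hf using h
  have hf_mono : StrictMonoOn f (Set.Iic P) := fun s hs t ht hst =>
    calc f s ≤ R ^ (s + 1) * m := (hf s hs).2
      _ ≤ R ^ t * m := mul_le_mul_of_nonneg_right (pow_le_pow_right₀ hR hst) hm
      _ < f t := (hf t ht).1
  have := card_le_card_of_injOn f (s := Iic P) (t := s) (fun t ht => hfs t (mem_Iic.1 ht))
    (by simpa only [coe_Iic] using hf_mono.injOn)
  rw [Nat.card_Iic] at this
  omega

lemma Finset.exists_maximal_pairwise {ι : Type*} {r : ι → ι → Prop} (hr : ∀ i j, r i j → r j i)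
    {T S : Finset ι} (hTS : T ⊆ S) (hT : (T : Set ι).Pairwise r) :
    ∃ S', T ⊆ S' ∧ S' ⊆ S ∧ (S' : Set ι).Pairwise r ∧ ∀ i ∈ S, i ∉ S' → ∃ j ∈ S', ¬ r i j := by
  classical
  obtain ⟨S', hTS', hmax⟩ := (S.powerset.filter fun U => T ⊆ U ∧ (U : Set ι).Pairwise r)
    |>.exists_le_maximal (mem_filter.2 ⟨mem_powerset.2 hTS, subset_rfl, hT⟩)
  obtain ⟨hS'S, -, hS'⟩ := mem_filter.1 hmax.prop
  refine ⟨S', hTS', mem_powerset.1 hS'S, hS', fun i hi hiS' => ?_⟩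
  by_contra! hfar
  have hins : insert i S' ∈ S.powerset.filter fun U => T ⊆ U ∧ (U : Set ι).Pairwise r :=
    mem_filter.2 ⟨mem_powerset.2 (insert_subset hi (mem_powerset.1 hS'S)),
      hTS'.trans (subset_insert _ _),
      coe_insert i S' ▸ hS'.insert fun j hj _ => ⟨hfar j hj, hr i j (hfar j hj)⟩⟩
  exact hiS' (hmax.eq_of_ge hins (subset_insert _ _) ▸ mem_insert_self i S')

noncomputable def layerEta (δ : ℝ) (n : ℕ) : ℝ := (δ / 2) ^ (n ^ 2 + 1)

lemma layerEta_pos {δ : ℝ} (hδ : 0 < δ) (n : ℕ) : 0 < layerEta δ n := by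
  unfold layerEta; positivity

lemma pow_mul_layerEta {δ : ℝ} (hδ : 0 < δ) (n : ℕ) :
    (2 / δ) ^ (n ^ 2) * layerEta δ n = δ / 2 := by
  rw [layerEta, pow_succ (δ / 2), ← mul_assoc, ← mul_pow, div_mul_div_comm, mul_comm 2 δ,
    div_self (by positivity), one_pow, one_mul]

section Layers

variable {ι : Type*} {D : ι → ι → ℝ}

def IsNextLayer (D : ι → ι → ℝ) (δ η : ℝ) (S S' : Finset ι) : Prop :=
  S' ⊂ S ∧ minPairDist D S ≤ δ * minPairDist D S' ∧
    ∀ i, ∃ j ∈ S', D i j ≤ δ * minPairDist D S' ∧ η * D i j ≤ minPairDist D S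

lemma exists_isNextLayer_of_gap {δ η G : ℝ} (hδ0 : 0 < δ) (hδ1 : δ ≤ 1) (hη : 0 ≤ η)
    (hsymm : ∀ i j, D i j = D j i) (hnonneg : ∀ i j, 0 ≤ D i j)
    (htri : ∀ i j k, D i k ≤ D i j + D j k) {S : Finset ι} {a b : ι} (ha : a ∈ S) (hb : b ∈ S)
    (hab : a ≠ b) (hnear : ∀ i, ∃ j ∈ S, D i j ≤ δ * minPairDist D S)
    (hmG : minPairDist D S ≤ G) (hηG : η * G ≤ δ / 2 * minPairDist D S) (hGab : G < D a b)
    (hgap : ∀ i ∈ S, ∀ j ∈ S, D i j ∉ Set.Ioc G (2 / δ * G)) :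
    ∃ S', IsNextLayer D δ η S S' ∧ a ∈ S' ∧ b ∈ S' := by
  classical
  set m := minPairDist D S
  have hm0 : 0 ≤ m := minPairDist_nonneg hnonneg S
  obtain ⟨S', hTS', hS'S, hsep, hcover⟩ := exists_maximal_pairwise (r := fun i j => G < D i j)
    (fun i j h => hsymm j i ▸ h) (insert_subset ha (singleton_subset_iff.2 hb))
    (by simp [Set.pairwise_insert, hab, hGab, hsymm b a])
  have ha' : a ∈ S' := hTS' (mem_insert_self a _)
  have hb' : b ∈ S' := hTS' (by simp)
  have hG' : 2 * G < δ * minPairDist D S' := by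
    obtain ⟨i, hi, j, hj, hij, hm'⟩ := exists_eq_minPairDist (D := D) ha' hb' hab
    have hout := hgap i (hS'S hi) j (hS'S hj)
    rw [Set.mem_Ioc, not_and, not_le] at hout
    rw [← hm']
    calc 2 * G = δ * (2 / δ * G) := by field_simp
      _ < δ * D i j := mul_lt_mul_of_pos_left (hout (hsep hi hj hij)) hδ0
  have hnear' : ∀ i, ∃ j ∈ S', D i j ≤ 2 * G := by
    intro i
    obtain ⟨j, hj, hij⟩ := hnear i
    have hij : D i j ≤ G := by nlinarith
    by_cases hjS' : j ∈ S'
    · exact ⟨j, hjS', by linarith⟩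
    obtain ⟨k, hk, hjk⟩ := hcover j hj hjS'
    exact ⟨k, hk, (htri i j k).trans (by linarith [not_lt.1 hjk])⟩
  refine ⟨S', ⟨(ssubset_iff_of_subset hS'S).2 ?_, by linarith, fun i => ?_⟩, ha', hb'⟩
  · obtain ⟨i, hi, j, hj, hij, hm⟩ := exists_eq_minPairDist (D := D) ha hb hab
    by_contra! hS
    exact absurd (hsep (hS i hi) (hS j hj) hij) (by simp only [hm]; linarith)
  · obtain ⟨j, hj, hij⟩ := hnear' i
    refine ⟨j, hj, by linarith, ?_⟩
    calc η * D i j ≤ η * (2 * G) := mul_le_mul_of_nonneg_left hij hη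
      _ ≤ δ * m := by linarith
      _ ≤ m := mul_le_of_le_one_left hm0 hδ1

lemma exists_isNextLayer [Fintype ι] {δ : ℝ} (hδ0 : 0 < δ) (hδ1 : δ ≤ 1) {n : ℕ}
    (hn : Fintype.card ι ≤ n) (hsymm : ∀ i j, D i j = D j i) (hnonneg : ∀ i j, 0 ≤ D i j)
    (htri : ∀ i j k, D i k ≤ D i j + D j k) {S : Finset ι} {a b : ι} (ha : a ∈ S) (hb : b ∈ S)
    (hab : a ≠ b) (hnear : ∀ i, ∃ j ∈ S, D i j ≤ δ * minPairDist D S)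
    (hsmall : minPairDist D S < layerEta δ n * D a b) :
    ∃ S', IsNextLayer D δ (layerEta δ n) S S' ∧ a ∈ S' ∧ b ∈ S' := by
  classical
  set m := minPairDist D S
  set η := layerEta δ n
  have hvals : #((S ×ˢ S).image fun p => D p.1 p.2) ≤ n ^ 2 :=
    calc _ ≤ #S * #S := card_image_le.trans (card_product S S).le
      _ ≤ n ^ 2 := by
        rw [sq]
        exact Nat.mul_le_mul (card_le_univ S |>.trans hn) (card_le_univ S |>.trans hn)
  obtain ⟨G, hmG, hGm, hgap⟩ := exists_gap_geometric (R := 2 / δ)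
    ((one_le_div hδ0).2 (by linarith)) (minPairDist_nonneg hnonneg S) hvals
  have hηG : η * G ≤ δ / 2 * m :=
    calc η * G ≤ η * ((2 / δ) ^ (n ^ 2) * m) :=
          mul_le_mul_of_nonneg_left hGm (layerEta_pos hδ0 n).le
      _ = δ / 2 * m := by rw [← mul_assoc, mul_comm η, pow_mul_layerEta hδ0]
  have hGab : G < D a b :=
    calc G ≤ (2 / δ) ^ (n ^ 2) * m := hGm
      _ < (2 / δ) ^ (n ^ 2) * (η * D a b) := mul_lt_mul_of_pos_left hsmall (by positivity)
      _ = δ / 2 * D a b := by rw [← mul_assoc, pow_mul_layerEta hδ0]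
      _ ≤ D a b := mul_le_of_le_one_left (hnonneg a b) (by linarith)
  exact exists_isNextLayer_of_gap hδ0 hδ1 (layerEta_pos hδ0 n).le hsymm hnonneg htri ha hb hab
    hnear hmG hηG hGab fun i hi j hj =>
      hgap _ (mem_image_of_mem _ (mem_product.2 ⟨hi, hj⟩ : (i, j) ∈ S ×ˢ S))

lemma exists_layers [Fintype ι] {δ : ℝ} (hδ0 : 0 < δ) (hδ1 : δ ≤ 1) {n : ℕ}
    (hn : Fintype.card ι ≤ n) (hsymm : ∀ i j, D i j = D j i) (hnonneg : ∀ i j, 0 ≤ D i j)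
    (htri : ∀ i j k, D i k ≤ D i j + D j k) {a b : ι} (hab : a ≠ b) (S : Finset ι)
    (ha : a ∈ S) (hb : b ∈ S) (hnear : ∀ i, ∃ j ∈ S, D i j ≤ δ * minPairDist D S) :
    ∃ (κ : ℕ) (I : ℕ → Finset ι), I 0 = S ∧
      (∀ k < κ, IsNextLayer D δ (layerEta δ n) (I k) (I (k + 1))) ∧
      a ∈ I κ ∧ b ∈ I κ ∧ layerEta δ n * D a b ≤ minPairDist D (I κ) := by
  induction S using Finset.strongInduction with
  | H S ih =>
    by_cases hstop : layerEta δ n * D a b ≤ minPairDist D S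
    · exact ⟨0, fun _ => S, rfl, by simp, ha, hb, hstop⟩
    obtain ⟨S', hS', ha', hb'⟩ := exists_isNextLayer hδ0 hδ1 hn hsymm hnonneg htri ha hb hab
      hnear (not_le.1 hstop)
    obtain ⟨κ, I, hI0, hI, haκ, hbκ, hκ⟩ := ih S' hS'.1 ha' hb'
      fun i => (hS'.2.2 i).imp fun _ ⟨hj, h, _⟩ => ⟨hj, h⟩
    refine ⟨κ + 1, fun | 0 => S | k + 1 => I k, rfl, ?_, haκ, hbκ, hκ⟩
    rintro (_ | k) hk
    · simpa [hI0] using hS'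
    · exact hI k (by omega)

end Layers

lemma maxMinDist_le {ι α : Type*} [MetricSpace α] {B : Set α} {I₀ I : Finset ι} {f : ι → Set α}
    {c : ℝ} (h₀ : I₀.Nonempty)
    (h : ∀ i ∈ I₀, ∃ j ∈ I, hausdorffDist (f i ∩ B) (f j ∩ B) ≤ c) : maxMinDist B I₀ I f ≤ c := by
  obtain ⟨i₀, hi₀⟩ := h₀
  refine csSup_le ⟨_, i₀, hi₀, rfl⟩ ?_
  rintro _ ⟨i, hi, rfl⟩
  obtain ⟨j, hj, hij⟩ := h i hi
  have hbdd : BddBelow {d | ∃ j ∈ I, d = hausdorffDist (f i ∩ B) (f j ∩ B)} := by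
    refine ⟨0, ?_⟩
    rintro _ ⟨j, -, rfl⟩
    exact hausdorffDist_nonneg
  exact (csInf_le hbdd ⟨j, hj, rfl⟩).trans hij

section HalfPlanes

variable {E : Type*} [NormedAddCommGroup E] [InnerProductSpace ℝ E] (V : Submodule ℝ E)

def halfPlane (e : E) : Set E := {x | ∃ v ∈ V, ∃ t : ℝ, 0 ≤ t ∧ x = v + t • e}

def extendedPlane (e : E) : Set E := {x | ∃ v ∈ V, ∃ t : ℝ, x = v + t • e}

variable {V} {e e' : E} {r : ℝ}

lemma halfPlane_inter_closedBall_nonempty (hr : 0 ≤ r) :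
    (halfPlane V e ∩ closedBall 0 r).Nonempty :=
  ⟨0, show ∃ v ∈ V, ∃ t : ℝ, 0 ≤ t ∧ (0 : E) = v + t • e from ⟨0, V.zero_mem, 0, le_rfl, by simp⟩,
    mem_closedBall_self hr⟩

lemma hausdorffEDist_halfPlane_inter_closedBall_ne_top (hr : 0 ≤ r) :
    hausdorffEDist (halfPlane V e ∩ closedBall 0 r) (halfPlane V e' ∩ closedBall 0 r) ≠ ⊤ :=
  hausdorffEDist_ne_top_of_nonempty_of_bounded (halfPlane_inter_closedBall_nonempty hr)
    (halfPlane_inter_closedBall_nonempty hr)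
    (isBounded_closedBall.subset Set.inter_subset_right)
    (isBounded_closedBall.subset Set.inter_subset_right)

lemma reflection_add_smul [V.HasOrthogonalProjection] (he : e ∈ Vᗮ) {v : E} (hv : v ∈ V)
    (t : ℝ) : V.reflection (v + t • e) = v + (-t) • e := by
  rw [map_add, map_smul, V.reflection_mem_subspace_eq_self hv,
    V.reflection_mem_subspace_orthogonalComplement_eq_neg he, smul_neg, neg_smul]

lemma extendedPlane_inter_closedBall [V.HasOrthogonalProjection] (he : e ∈ Vᗮ) (r : ℝ) :
    extendedPlane V e ∩ closedBall 0 r =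
      halfPlane V e ∩ closedBall 0 r ∪ V.reflection '' (halfPlane V e ∩ closedBall 0 r) := by
  ext x
  constructor
  · rintro ⟨⟨v, hv, t, rfl⟩, hx⟩
    rcases le_total 0 t with ht | ht
    · exact .inl ⟨⟨v, hv, t, ht, rfl⟩, hx⟩
    refine .inr ⟨v + (-t) • e, ⟨⟨v, hv, -t, neg_nonneg.2 ht, rfl⟩, ?_⟩, ?_⟩
    · rwa [← neg_neg t, ← reflection_add_smul he hv, mem_closedBall_zero_iff,
        LinearIsometryEquiv.norm_map, ← mem_closedBall_zero_iff, neg_neg]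
    · rw [reflection_add_smul he hv, neg_neg]
  · rintro (⟨⟨v, hv, t, -, rfl⟩, hx⟩ | ⟨_, ⟨⟨v, hv, t, -, rfl⟩, hx⟩, rfl⟩)
    · exact ⟨⟨v, hv, t, rfl⟩, hx⟩
    · refine ⟨⟨v, hv, -t, reflection_add_smul he hv t⟩, ?_⟩
      rwa [mem_closedBall_zero_iff, LinearIsometryEquiv.norm_map, ← mem_closedBall_zero_iff]

lemma hausdorffDist_extendedPlane_le [V.HasOrthogonalProjection] (he : e ∈ Vᗮ) (he' : e' ∈ Vᗮ)
    (hr : 0 ≤ r) :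
    hausdorffDist (extendedPlane V e ∩ closedBall 0 r) (extendedPlane V e' ∩ closedBall 0 r) ≤
      hausdorffDist (halfPlane V e ∩ closedBall 0 r) (halfPlane V e' ∩ closedBall 0 r) := by
  rw [extendedPlane_inter_closedBall he, extendedPlane_inter_closedBall he']
  refine ENNReal.toReal_mono (hausdorffEDist_halfPlane_inter_closedBall_ne_top hr) ?_
  refine hausdorffEDist_union_le.trans ?_
  rw [hausdorffEDist_image V.reflection.isometry, max_self]

end HalfPlanes

theorem layer_subdivision_general (N : ℕ) (hN : 2 ≤ N)
    (δ : ℝ) (hδ0 : 0 < δ) (hδ1 : δ ≤ 1) :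
    ∃ η : ℝ, 0 < η ∧
      ∀ (m n : ℕ), 1 ≤ m →
      ∀ (V : Submodule ℝ (EuclideanSpace ℝ (Fin (m + n)))),
        Module.finrank ℝ V = m - 1 →
      ∀ (e : Fin N → EuclideanSpace ℝ (Fin (m + n))),
        (∀ i, e i ≠ 0) →
        (∀ i, ∀ v ∈ V, (inner ℝ (e i) v : ℝ) = 0) →
      ∀ (H pl : Fin N → Set (EuclideanSpace ℝ (Fin (m + n)))),
        (∀ i, H i = {x | ∃ v ∈ V, ∃ t : ℝ, 0 ≤ t ∧ x = v + t • e i}) →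
        (∀ i, pl i = {x | ∃ v ∈ V, ∃ t : ℝ, x = v + t • e i}) →
        (∀ i j, i ≠ j → H i ≠ H j) →
      ∃ (κ : ℕ) (I : ℕ → Finset (Fin N)),
        I 0 = Finset.univ ∧
        (∀ k < κ, I (k + 1) ⊂ I k) ∧
        2 ≤ (I κ).card ∧
        maxSep (closedBall 0 1) (I κ) pl = maxSep (closedBall 0 1) (I 0) pl ∧
        η * maxSep (closedBall 0 1) (I κ) pl ≤ minSep (closedBall 0 1) (I κ) H ∧
        (∀ k, 1 ≤ k → k ≤ κ →
          maxMinDist (closedBall 0 1) (I 0) (I k) H ≤ δ * minSep (closedBall 0 1) (I k) H ∧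
          η * maxMinDist (closedBall 0 1) (I 0) (I k) H ≤ minSep (closedBall 0 1) (I (k - 1)) H ∧
          minSep (closedBall 0 1) (I (k - 1)) H ≤ δ * minSep (closedBall 0 1) (I k) H) := by
  have hη := layerEta_pos hδ0 N
  refine ⟨layerEta δ N, hη, fun m n _ V _ e _ he H pl hH hpl _ => ?_⟩
  have he' : ∀ i, e i ∈ Vᗮ := fun i => (V.mem_orthogonal' _).2 (he i)
  set B := closedBall (0 : EuclideanSpace ℝ (Fin (m + n))) 1
  set DH := fun i j => hausdorffDist (H i ∩ B) (H j ∩ B)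
  have hfin : ∀ i j, hausdorffEDist (H i ∩ B) (H j ∩ B) ≠ ⊤ := fun i j => by
    rw [hH, hH]; exact hausdorffEDist_halfPlane_inter_closedBall_ne_top zero_le_one
  obtain ⟨a, -, b, -, hab, hmax⟩ := exists_eq_sSup_pairDists
    (D := fun i j => hausdorffDist (pl i ∩ B) (pl j ∩ B)) (mem_univ ⟨0, by omega⟩)
    (mem_univ ⟨1, by omega⟩) (by simp [Fin.ext_iff])
  obtain ⟨κ, I, hI0, hI, ha, hb, hκ⟩ := exists_layers hδ0 hδ1 (Fintype.card_fin N).le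
    (D := DH) (fun _ _ => hausdorffDist_comm) (fun _ _ => hausdorffDist_nonneg)
    (fun i _ _ => hausdorffDist_triangle (hfin i _)) hab univ (mem_univ a) (mem_univ b)
    fun i => ⟨i, mem_univ i, hausdorffDist_self_zero.trans_le <|
      mul_nonneg hδ0.le (minPairDist_nonneg (fun _ _ => hausdorffDist_nonneg) _)⟩
  have hmaxκ : maxSep B (I κ) pl = maxSep B univ pl :=
    sSup_pairDists_eq_of_subset (subset_univ _) ha hb hab hmax
  refine ⟨κ, I, hI0, fun k hk => (hI k hk).1, one_lt_card.2 ⟨a, ha, b, hb, hab⟩, hI0 ▸ hmaxκ, ?_,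
    fun k hk1 hkκ => ?_⟩
  · calc layerEta δ N * maxSep B (I κ) pl
        = layerEta δ N * hausdorffDist (pl a ∩ B) (pl b ∩ B) := by rw [hmaxκ, hmax]; rfl
      _ ≤ layerEta δ N * DH a b := by
        gcongr
        simp only [DH, hH, hpl]
        exact hausdorffDist_extendedPlane_le (he' a) (he' b) zero_le_one
      _ ≤ minSep B (I κ) H := hκ
  obtain ⟨k, rfl⟩ := Nat.exists_eq_add_of_le' hk1
  obtain ⟨-, hmono, hcover⟩ := hI k (by omega)
  rw [Nat.add_sub_cancel, hI0]
  refine ⟨maxMinDist_le ⟨a, mem_univ a⟩ fun i _ => (hcover i).imp fun _ ⟨hj, h, _⟩ => ⟨hj, h⟩,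
    (le_div_iff₀' hη).1 (maxMinDist_le ⟨a, mem_univ a⟩ fun i _ => (hcover i).imp
      fun _ ⟨hj, _, h⟩ => ⟨hj, (le_div_iff₀' hη).2 h⟩), hmono⟩

/-- **Layer subdivision lemma.** -/
theorem layer_subdivision (N q : ℕ) (hN : 2 ≤ N) (hNq : N ≤ q)
    (δ : ℝ) (hδ0 : 0 < δ) (hδ1 : δ ≤ 1) :
    ∃ η : ℝ, 0 < η ∧
      ∀ (m n : ℕ), 1 ≤ m →
      ∀ (V : Submodule ℝ (EuclideanSpace ℝ (Fin (m + n)))),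
        Module.finrank ℝ V = m - 1 →
      ∀ (e : Fin N → EuclideanSpace ℝ (Fin (m + n))),
        (∀ i, e i ≠ 0) →
        (∀ i, ∀ v ∈ V, (inner ℝ (e i) v : ℝ) = 0) →
      ∀ (H pl : Fin N → Set (EuclideanSpace ℝ (Fin (m + n)))),
        (∀ i, H i = {x | ∃ v ∈ V, ∃ t : ℝ, 0 ≤ t ∧ x = v + t • e i}) →
        (∀ i, pl i = {x | ∃ v ∈ V, ∃ t : ℝ, x = v + t • e i}) →
        (∀ i j, i ≠ j → H i ≠ H j) →
      ∃ (κ : ℕ) (I : ℕ → Finset (Fin N)),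
        I 0 = Finset.univ ∧
        (∀ k < κ, I (k + 1) ⊂ I k) ∧
        2 ≤ (I κ).card ∧
        maxSep (closedBall 0 1) (I κ) pl = maxSep (closedBall 0 1) (I 0) pl ∧
        η * maxSep (closedBall 0 1) (I κ) pl ≤ minSep (closedBall 0 1) (I κ) H ∧
        (∀ k, 1 ≤ k → k ≤ κ →
          maxMinDist (closedBall 0 1) (I 0) (I k) H ≤ δ * minSep (closedBall 0 1) (I k) H ∧
          η * maxMinDist (closedBall 0 1) (I 0) (I k) H ≤ minSep (closedBall 0 1) (I (k - 1)) H ∧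
          minSep (closedBall 0 1) (I (k - 1)) H ≤ δ * minSep (closedBall 0 1) (I k) H) :=
  layer_subdivision_general N hN δ hδ0 hδ1
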